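/- arXiv:1512.08732 — 4 statements merged into one kernel-verified Lean document; each statement's English description precedes it below -/
import Mathlib

section
/- Let C > 0, m ∈ ℕ with m ≥ 1, r = e^{−C/m}, and θ ∈ ℝ. Then |∑_{t=1}^{m} r^t e^{itθ}/t + ln(1 − r·e^{iθ})| < ∫_C^∞ e^{−x}/x dx, where ln denotes the principal branch of the complex logarithm. -/
/-!
With `r = e^{-C/m}` and `z = r e^{iθ}`, the quantity is minus the tail `∑_{t>m} z^t/t` of the
series of `-log (1 - z)`, whose norm is at most `∑_{t>m} f t` for the strictly decreasing
`f x = e^{-Cx/m}/x`. Each `f t` is below `∫_{t-1}^t f`, the first one strictly, so the tail is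
below `∫_m^∞ f`, which is `∫_C^∞ e^{-x}/x dx` after the substitution `x ↦ Cx/m`.
-/

open MeasureTheory Set Finset Real

theorem Complex.norm_sum_range_add_log_le {z : ℂ} (hz : ‖z‖ < 1) (n : ℕ) :
    ‖∑ t ∈ range n, z ^ t / t + log (1 - z)‖ ≤
      ∑' k : ℕ, ‖z‖ ^ (k + n) / (k + n : ℕ) := by
  have hlog := hasSum_taylorSeries_neg_log hz
  have htail :
      ∑ t ∈ range n, z ^ t / t + log (1 - z) = -∑' k : ℕ, z ^ (k + n) / (k + n : ℕ) := by
    linear_combination hlog.summable.sum_add_tsum_nat_add n + hlog.tsum_eq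
  have hsummable : Summable fun k : ℕ => ‖z‖ ^ (k + n) / (k + n : ℕ) :=
    ((summable_nat_add_iff n).2 (summable_geometric_of_lt_one (norm_nonneg z) hz)).of_nonneg_of_le
      (fun k => by positivity) (fun k => div_nat_le_self_of_nonnneg (by positivity) _)
  rw [htail, norm_neg]
  refine tsum_of_norm_bounded hsummable.hasSum fun k => ?_
  rw [norm_div, norm_pow, Complex.norm_natCast]

theorem StrictAntiOn.tsum_comp_add_lt_integral {f : ℝ → ℝ} (N : ℕ)
    (anti : StrictAntiOn f (Ici (N : ℝ))) (cont : ContinuousOn f (Ici (N : ℝ)))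
    (integrable : IntegrableOn f (Ioi (N : ℝ)))
    (nonneg : ∀ t ∈ Ioi (N : ℝ), 0 ≤ f t) :
    ∑' n : ℕ, f (n + N + 1 : ℕ) < ∫ x in Ioi (N : ℝ), f x := by
  have hsummable : Summable fun n : ℕ => f (n + N + 1 : ℕ) :=
    (summable_nat_add_iff (N + 1)).2
      (anti.antitoneOn.summable_of_integrableOn_Ioi integrable nonneg)
  have hlt : (N : ℝ) < (N + 1 : ℕ) := by push_cast; linarith
  have hfirst : f (N + 1 : ℕ) < ∫ x in (N : ℝ)..(N + 1 : ℕ), f x := by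
    calc f (N + 1 : ℕ) = ∫ _ in (N : ℝ)..(N + 1 : ℕ), f (N + 1 : ℕ) := by simp
      _ < ∫ x in (N : ℝ)..(N + 1 : ℕ), f x :=
        intervalIntegral.integral_lt_integral_of_continuousOn_of_le_of_exists_lt hlt
          continuousOn_const (cont.mono Icc_subset_Ici_self)
          (fun x hx => anti.antitoneOn hx.1.le hlt.le hx.2)
          ⟨N, left_mem_Icc.2 hlt.le, anti self_mem_Ici hlt.le hlt⟩
  have hrest :
      ∑' n : ℕ, f (n + (N + 1) + 1 : ℕ) ≤ ∫ x in Ioi ((N + 1 : ℕ) : ℝ), f x :=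
    AntitoneOn.tsum_comp_add_le_integral (N + 1)
      (anti.antitoneOn.mono (Ici_subset_Ici.2 hlt.le))
      (integrable.mono_set (Ioi_subset_Ioi hlt.le)) fun t ht => nonneg t (hlt.trans ht)
  calc ∑' n : ℕ, f (n + N + 1 : ℕ)
        = f (N + 1 : ℕ) + ∑' n : ℕ, f (n + (N + 1) + 1 : ℕ) := by
          rw [hsummable.tsum_eq_zero_add]
          simp only [zero_add, add_right_comm _ 1 N, add_assoc]
    _ < (∫ x in (N : ℝ)..(N + 1 : ℕ), f x) + ∫ x in Ioi ((N + 1 : ℕ) : ℝ), f x :=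
        add_lt_add_of_lt_of_le hfirst hrest
    _ = ∫ x in Ioi (N : ℝ), f x :=
        intervalIntegral.integral_interval_add_Ioi integrable
          (integrable.mono_set (Ioi_subset_Ioi hlt.le))

theorem strictAntiOn_exp_neg_mul_div {c : ℝ} (hc : 0 ≤ c) :
    StrictAntiOn (fun x => exp (-(c * x)) / x) (Ioi 0) := by
  intro x hx y hy hxy
  have hexp : exp (-(c * y)) ≤ exp (-(c * x)) := exp_le_exp.2 (by nlinarith)
  exact (div_le_div_of_nonneg_right hexp (le_of_lt hy)).trans_lt
    (div_lt_div_of_pos_left (exp_pos _) hx hxy)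

theorem integrableOn_exp_neg_mul_div_Ioi {a c : ℝ} (ha : 0 < a) (hc : 0 < c) :
    IntegrableOn (fun x => exp (-(c * x)) / x) (Ioi a) := by
  refine ((exp_neg_integrableOn_Ioi a hc).div_const a).mono'
    (Measurable.aestronglyMeasurable (by fun_prop)) ?_
  filter_upwards [ae_restrict_mem measurableSet_Ioi] with x hx
  rw [norm_of_nonneg (by positivity [ha.trans hx]), neg_mul]
  exact div_le_div_of_nonneg_left (exp_pos _).le ha hx.le

theorem integral_exp_neg_mul_div_Ioi (a : ℝ) {c : ℝ} (hc : 0 < c) :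
    ∫ x in Ioi a, exp (-(c * x)) / x = ∫ u in Ioi (c * a), exp (-u) / u := by
  rw [← integral_comp_mul_left_Ioi' _ a hc, ← integral_smul]
  congr 1 with x
  rw [smul_eq_mul, ← mul_div_assoc, mul_div_mul_left _ _ hc.ne']

theorem stmt2 (C : ℝ) (hC : 0 < C) (m : ℕ) (hm : 1 ≤ m) (θ : ℝ) :
    ‖(∑ t ∈ Finset.Icc 1 m,
        ((Real.exp (-C/m) : ℂ))^t * Complex.exp (Complex.I * t * θ) / t
      + Complex.log (1 - (Real.exp (-C/m) : ℂ) * Complex.exp (Complex.I * θ)))‖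
    < ∫ x in Set.Ioi C, Real.exp (-x) / x := by
  have hm0 : (0 : ℝ) < m := by exact_mod_cast hm
  have hc : 0 < C / m := div_pos hC hm0
  set z : ℂ := (exp (-C / m) : ℂ) * Complex.exp (Complex.I * θ)
  have hz : ‖z‖ = exp (-C / m) := by
    simp [z, Complex.norm_exp]
  have hz1 : ‖z‖ < 1 := hz ▸ exp_lt_one_iff.2 (by rw [neg_div]; linarith)
  have hsum : ∑ t ∈ Icc 1 m, (exp (-C / m) : ℂ) ^ t * Complex.exp (Complex.I * t * θ) / t =
      ∑ t ∈ range (m + 1), z ^ t / t := by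
    rw [← Finset.Ico_add_one_right_eq_Icc, Finset.range_eq_Ico,
      Finset.sum_eq_sum_Ico_succ_bot (Nat.succ_pos m), Nat.cast_zero, div_zero, zero_add]
    refine Finset.sum_congr rfl fun t _ => ?_
    rw [mul_pow, ← Complex.exp_nat_mul]
    ring_nf
  have htail : ∀ k : ℕ, ‖z‖ ^ (k + (m + 1)) / (k + (m + 1) : ℕ) =
      exp (-(C / m * (k + m + 1 : ℕ))) / (k + m + 1 : ℕ) := by
    intro k
    rw [hz, ← exp_nat_mul, ← add_assoc]
    ring_nf
  calc _ = ‖∑ t ∈ range (m + 1), z ^ t / t + Complex.log (1 - z)‖ := by rw [hsum]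
    _ ≤ ∑' k : ℕ, ‖z‖ ^ (k + (m + 1)) / (k + (m + 1) : ℕ) :=
        Complex.norm_sum_range_add_log_le hz1 _
    _ = ∑' k : ℕ, exp (-(C / m * (k + m + 1 : ℕ))) / (k + m + 1 : ℕ) := tsum_congr htail
    _ < ∫ x in Ioi (m : ℝ), exp (-(C / m * x)) / x :=
        ((strictAntiOn_exp_neg_mul_div hc.le).mono fun _ hx => hm0.trans_le hx)
          |>.tsum_comp_add_lt_integral m
            (by fun_prop (disch := exact fun x hx => (hm0.trans_le hx).ne'))
            (integrableOn_exp_neg_mul_div_Ioi hm0 hc) fun x hx => by positivity [hm0.trans hx]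
    _ = ∫ x in Ioi C, exp (-x) / x := by
        rw [integral_exp_neg_mul_div_Ioi _ hc, div_mul_cancel₀ _ hm0.ne']
end

section
/- Let m ≥ 1, r = e^{−1/m}, and |θ| ≤ 1/m^{3/2}. Then |1 − r·e^{iθ}|² ≤ 1/m², hence −ln|1 − r·e^{iθ}| ≥ ln m. -/
/-!
Write `r = e^{-x}` with `x = 1/m`. Then `‖1 - r e^{iθ}‖² = (1 - r)² + 2r(1 - cos θ) ≤ (1 - r)² + rθ²`,
and for `θ² ≤ x³` the bound `(1 - r)² + r x³ ≤ x²` is, after multiplying by `eˣ`, the inequality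
`x³ ≤ x² eˣ + 2 - (eˣ + e⁻ˣ)`. Since `eˣ + e⁻ˣ - 2 = 2(cosh x - 1) ≤ x² cosh x` (from `tanh y ≤ y` at
`y = x/2`), it reduces to `x ≤ sinh x`.
-/

open Real

theorem Real.sinh_le_mul_cosh {y : ℝ} (hy : 0 ≤ y) : sinh y ≤ y * cosh y := by
  refine hasSum_le (fun n ↦ ?_) (hasSum_sinh y) ((hasSum_cosh y).mul_left y)
  rw [← mul_div_assoc, ← pow_succ']
  gcongr
  omega

theorem Real.two_mul_cosh_sub_one_le (x : ℝ) : 2 * (cosh x - 1) ≤ x ^ 2 * cosh x := by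
  wlog hx : 0 ≤ x generalizing x
  · simpa using this (-x) (by linarith)
  obtain ⟨y, hy, rfl⟩ : ∃ y, 0 ≤ y ∧ 2 * y = x := ⟨x / 2, by positivity, by ring⟩
  have hsinh : sinh y ^ 2 ≤ (y * cosh y) ^ 2 :=
    pow_le_pow_left₀ (sinh_nonneg_iff.2 hy) (sinh_le_mul_cosh hy) 2
  have hcosh : cosh (2 * y) + 1 ≤ 2 * cosh (2 * y) := by linarith [one_le_cosh (2 * y)]
  nlinarith [cosh_two_mul y, cosh_sq y, mul_le_mul_of_nonneg_left hcosh (sq_nonneg (2 * y))]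

theorem Real.pow_three_le_sq_mul_exp_add_two_sub {x : ℝ} (hx : 0 ≤ x) :
    x ^ 3 ≤ x ^ 2 * exp x + 2 - (exp x + exp (-x)) := by
  have hcosh := two_mul_cosh_sub_one_le x
  have hsinh := mul_le_mul_of_nonneg_left (self_le_sinh_iff.2 hx) (sq_nonneg x)
  rw [cosh_eq] at hcosh
  rw [sinh_eq] at hsinh
  linarith

theorem Real.one_sub_exp_neg_sq_add_exp_neg_mul_pow_three_le {x : ℝ} (hx : 0 ≤ x) :
    (1 - exp (-x)) ^ 2 + exp (-x) * x ^ 3 ≤ x ^ 2 := by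
  have h := mul_le_mul_of_nonneg_left (pow_three_le_sq_mul_exp_add_two_sub hx) (exp_pos (-x)).le
  have hinv : exp (-x) * exp x = 1 := by rw [← exp_add, neg_add_cancel, exp_zero]
  nlinarith

namespace Complex

theorem norm_one_sub_ofReal_mul_exp_sq (r θ : ℝ) :
    ‖1 - (r : ℂ) * exp (I * θ)‖ ^ 2 = (1 - r) ^ 2 + 2 * r * (1 - Real.cos θ) := by
  rw [mul_comm I, exp_mul_I, Complex.sq_norm, normSq_apply]
  simp only [← ofReal_cos, ← ofReal_sin, sub_re, one_re, mul_re, ofReal_re, add_re, I_re, mul_zero,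
    ofReal_im, I_im, mul_one, sub_self, add_zero, add_im, mul_im, zero_add, zero_mul, sub_zero, sub_im,
    one_im, zero_sub, mul_neg, neg_mul, neg_neg]
  linear_combination r ^ 2 * Real.sin_sq_add_cos_sq θ

theorem norm_one_sub_ofReal_mul_exp_sq_le {r : ℝ} (hr : 0 ≤ r) (θ : ℝ) :
    ‖1 - (r : ℂ) * exp (I * θ)‖ ^ 2 ≤ (1 - r) ^ 2 + r * θ ^ 2 := by
  rw [norm_one_sub_ofReal_mul_exp_sq]
  nlinarith [Real.one_sub_sq_div_two_le_cos (x := θ)]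

theorem norm_one_sub_ofReal_mul_exp_pos {r : ℝ} (hr₀ : 0 ≤ r) (hr₁ : r < 1) (θ : ℝ) :
    0 < ‖1 - (r : ℂ) * exp (I * θ)‖ := by
  have h : 0 < ‖1 - (r : ℂ) * exp (I * θ)‖ ^ 2 := by
    rw [norm_one_sub_ofReal_mul_exp_sq]
    nlinarith [Real.cos_le_one θ, pow_pos (sub_pos.2 hr₁) 2]
  nlinarith [norm_nonneg (1 - (r : ℂ) * exp (I * θ))]

theorem norm_one_sub_exp_neg_mul_exp_sq_le {x θ : ℝ} (hx : 0 ≤ x) (hθ : θ ^ 2 ≤ x ^ 3) :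
    ‖1 - (Real.exp (-x) : ℂ) * exp (I * θ)‖ ^ 2 ≤ x ^ 2 :=
  calc _ ≤ (1 - Real.exp (-x)) ^ 2 + Real.exp (-x) * θ ^ 2 :=
        norm_one_sub_ofReal_mul_exp_sq_le (Real.exp_pos _).le θ
    _ ≤ (1 - Real.exp (-x)) ^ 2 + Real.exp (-x) * x ^ 3 := by gcongr
    _ ≤ x ^ 2 := one_sub_exp_neg_sq_add_exp_neg_mul_pow_three_le hx

end Complex

theorem stmt12 (m : ℕ) (hm : 1 ≤ m) (θ : ℝ) (hθ : |θ| ≤ 1 / (m:ℝ) ^ ((3:ℝ)/2)) :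
    ‖(1 - (Real.exp (-1/(m:ℝ)) : ℂ) * Complex.exp (Complex.I * θ))‖ ^ 2
      ≤ 1 / (m:ℝ)^2 ∧
    Real.log m
      ≤ -Real.log (‖
          (1 - (Real.exp (-1/(m:ℝ)) : ℂ) * Complex.exp (Complex.I * θ))‖) := by
  have hm₀ : (0 : ℝ) < m := by exact_mod_cast hm
  have hθ₂ : θ ^ 2 ≤ (1 / (m : ℝ)) ^ 3 :=
    calc θ ^ 2 = |θ| ^ 2 := (sq_abs θ).symm
      _ ≤ (1 / (m : ℝ) ^ ((3 : ℝ) / 2)) ^ 2 := by gcongr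
      _ = (1 / (m : ℝ)) ^ 3 := by
        rw [div_pow, ← Real.rpow_mul_natCast hm₀.le]; norm_num
  have hsq := Complex.norm_one_sub_exp_neg_mul_exp_sq_le (by positivity) hθ₂
  rw [← neg_div] at hsq
  refine ⟨by simpa only [div_pow, one_pow] using hsq, ?_⟩
  have hr₁ : exp (-1 / (m : ℝ)) < 1 := exp_lt_one_iff.2 (div_neg_of_neg_of_pos (by norm_num) hm₀)
  have hpos := Complex.norm_one_sub_ofReal_mul_exp_pos (exp_pos _).le hr₁ θ
  rw [le_neg, ← log_inv, ← one_div]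
  exact log_le_log hpos (abs_le_of_sq_le_sq' hsq (by positivity)).2
end

section
/- With a_{m,t} = e^{−t/m} for t ≤ m and J_m ≥ 2π·m^{3/2}, the kernel S_m(e^{iθ}) = ∑_{t=1}^m a_{m,t} e^{itθ}/t satisfies lim_{m→∞} S_m(e^{2πi/J_m}) / S_m(1) = 1. -/
open Finset Filter Topology

/-!
Twisting the weights by `e^{itθ}` moves the `t`-th term of `∑ a_t/t` by at most `|a_t| |θ|`, so
`|S_m(e^{iθ}) - S_m(1)| ≤ m θ ≤ m^{-1/2}` for `θ = 2π/J_m ≤ m^{-3/2}`, while `S_m(1) ≥ e^{-1}`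
(its first term alone). Hence the ratio differs from `1` by at most `e m^{-1/2} → 0`.
-/

lemma norm_sum_mul_exp_div_sub_sum_div_le (s : Finset ℕ) (a : ℕ → ℂ) (θ : ℝ) :
    ‖∑ t ∈ s, a t * Complex.exp (Complex.I * t * θ) / t - ∑ t ∈ s, a t / t‖
      ≤ (∑ t ∈ s, ‖a t‖) * |θ| := by
  rw [← sum_sub_distrib, sum_mul]
  refine (norm_sum_le _ _).trans (sum_le_sum fun t _ => ?_)
  rcases Nat.eq_zero_or_pos t with rfl | ht
  · simp only [CharP.cast_eq_zero, div_zero, sub_self, norm_zero]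
    positivity
  have htθ : ‖Complex.exp (Complex.I * t * θ) - 1‖ ≤ t * |θ| := by
    simpa [mul_assoc, abs_mul] using Real.norm_exp_I_mul_ofReal_sub_one_le (x := t * θ)
  calc ‖a t * Complex.exp (Complex.I * t * θ) / t - a t / t‖
      = ‖a t‖ * ‖Complex.exp (Complex.I * t * θ) - 1‖ / t := by
        rw [← sub_div, ← mul_sub_one, norm_div, norm_mul, Complex.norm_natCast]
    _ ≤ ‖a t‖ * (t * |θ|) / t := by gcongr
    _ = ‖a t‖ * |θ| := by field_simp

lemma norm_div_sub_one_le {z w : ℂ} (c : ℝ) (hw : c ≤ ‖w‖) (hc : 0 < c) :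
    ‖z / w - 1‖ ≤ ‖z - w‖ / c := by
  have hw0 : w ≠ 0 := norm_pos_iff.mp (hc.trans_le hw)
  rw [div_sub_one hw0, norm_div]
  gcongr

lemma exp_neg_one_le_norm_sum_exp_neg_div (m : ℕ) (hm : 1 ≤ m) :
    Real.exp (-1) ≤ ‖∑ t ∈ Icc 1 m, (Real.exp (-(t : ℝ) / m) : ℂ) / t‖ := by
  have hm' : (1 : ℝ) ≤ m := by exact_mod_cast hm
  have hreal : ∑ t ∈ Icc 1 m, (Real.exp (-(t : ℝ) / m) : ℂ) / t
      = ((∑ t ∈ Icc 1 m, Real.exp (-(t : ℝ) / m) / t : ℝ) : ℂ) := by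
    push_cast; rfl
  rw [hreal, Complex.norm_real, Real.norm_of_nonneg (by positivity)]
  calc Real.exp (-1) ≤ Real.exp (-((1 : ℕ) : ℝ) / m) / ((1 : ℕ) : ℝ) := by
        rw [Nat.cast_one, div_one, Real.exp_le_exp, neg_div, neg_le_neg_iff]
        exact div_le_one_of_le₀ hm' (by positivity)
    _ ≤ ∑ t ∈ Icc 1 m, Real.exp (-(t : ℝ) / m) / t :=
        single_le_sum (f := fun t : ℕ => Real.exp (-(t : ℝ) / m) / t)
          (fun t _ => by positivity) (by simp [hm])

lemma sum_exp_neg_div_le (m : ℕ) : ∑ t ∈ Icc 1 m, ‖(Real.exp (-(t : ℝ) / m) : ℂ)‖ ≤ m := by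
  calc ∑ t ∈ Icc 1 m, ‖(Real.exp (-(t : ℝ) / m) : ℂ)‖ ≤ ∑ _t ∈ Icc 1 m, (1 : ℝ) := by
        refine sum_le_sum fun t _ => ?_
        rw [Complex.norm_real, Real.norm_of_nonneg (Real.exp_nonneg _), Real.exp_le_one_iff]
        exact div_nonpos_of_nonpos_of_nonneg (by simp) (by simp)
    _ = m := by simp

lemma mul_two_pi_div_le_rpow (m : ℕ) (hm : 1 ≤ m) (J : ℝ)
    (hJ : 2 * Real.pi * (m : ℝ) ^ ((3 : ℝ) / 2) ≤ J) :
    m * |2 * Real.pi / J| ≤ (m : ℝ) ^ (-(1 / 2 : ℝ)) := by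
  have hm0 : (0 : ℝ) < m := by exact_mod_cast hm
  have hJ0 : 0 < J := lt_of_lt_of_le (by positivity) hJ
  calc m * |2 * Real.pi / J| ≤ m * ((m : ℝ) ^ ((3 : ℝ) / 2))⁻¹ := by
        gcongr
        rw [abs_of_pos (by positivity), ← one_div, div_le_div_iff₀ hJ0 (by positivity)]
        linarith
    _ = (m : ℝ) ^ (-(1 / 2 : ℝ)) := by
        rw [← Real.rpow_neg hm0.le, ← Real.rpow_one_add' hm0.le (by norm_num)]
        norm_num

theorem stmt14 (J : ℕ → ℝ) (hJ : ∀ m : ℕ, 1 ≤ m → 2*Real.pi*(m:ℝ)^((3:ℝ)/2) ≤ J m) :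
    Filter.Tendsto (fun m : ℕ =>
        (∑ t ∈ Finset.Icc 1 m, (Real.exp (-(t:ℝ)/m) : ℂ)
            * Complex.exp (Complex.I * t * (2*Real.pi / J m)) / t)
        / (∑ t ∈ Finset.Icc 1 m, (Real.exp (-(t:ℝ)/m) : ℂ) / t))
      Filter.atTop (nhds 1) := by
  have hbound : ∀ m : ℕ, 1 ≤ m →
      ‖(∑ t ∈ Icc 1 m, (Real.exp (-(t:ℝ)/m) : ℂ)
            * Complex.exp (Complex.I * t * (2*Real.pi / J m)) / t)
        / (∑ t ∈ Icc 1 m, (Real.exp (-(t:ℝ)/m) : ℂ) / t) - 1‖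
        ≤ (m : ℝ) ^ (-(1 / 2 : ℝ)) / Real.exp (-1) := by
    intro m hm
    have hθ : (2 * Real.pi / J m : ℂ) = ((2 * Real.pi / J m : ℝ) : ℂ) := by push_cast; rfl
    rw [hθ]
    calc _ ≤ ‖(∑ t ∈ Icc 1 m, (Real.exp (-(t:ℝ)/m) : ℂ)
              * Complex.exp (Complex.I * t * ((2 * Real.pi / J m : ℝ) : ℂ)) / t)
            - ∑ t ∈ Icc 1 m, (Real.exp (-(t:ℝ)/m) : ℂ) / t‖ / Real.exp (-1) :=
          norm_div_sub_one_le _ (exp_neg_one_le_norm_sum_exp_neg_div m hm) (Real.exp_pos _)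
      _ ≤ (∑ t ∈ Icc 1 m, ‖(Real.exp (-(t:ℝ)/m) : ℂ)‖) * |2 * Real.pi / J m| / Real.exp (-1) := by
          gcongr
          exact norm_sum_mul_exp_div_sub_sum_div_le _ (fun t : ℕ => (Real.exp (-(t:ℝ)/m) : ℂ)) _
      _ ≤ m * |2 * Real.pi / J m| / Real.exp (-1) := by
          gcongr
          exact sum_exp_neg_div_le m
      _ ≤ (m : ℝ) ^ (-(1 / 2 : ℝ)) / Real.exp (-1) := by
          gcongr
          exact mul_two_pi_div_le_rpow m hm (J m) (hJ m hm)
  have hlim : Tendsto (fun m : ℕ => (m : ℝ) ^ (-(1 / 2 : ℝ)) / Real.exp (-1)) atTop (𝓝 0) := by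
    simpa only [zero_div, Function.comp_apply] using
      ((tendsto_rpow_neg_atTop (y := 1 / 2) (by norm_num)).comp
        tendsto_natCast_atTop_atTop).div_const (Real.exp (-1))
  rw [tendsto_iff_norm_sub_tendsto_zero]
  exact squeeze_zero' (Eventually.of_forall fun _ => norm_nonneg _)
    (eventually_atTop.mpr ⟨1, hbound⟩) hlim
end

section
/- Let m ≥ 3, r = e^{−1/m}, and |θ| ≤ π/3. Then the truncated Poisson kernel S_m(e^{iθ}) = ∑_{t=1}^m e^{−t/m} e^{itθ}/t satisfies |S_m(e^{iθ})| ≥ −ln|1 − e^{−1/m + iθ}| − e^{−1}. -/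
/-!
With `z = exp (-1/m + iθ)` the sum is `∑_{t=1}^m z^t / t`, the degree `m` Taylor polynomial of
`-log (1 - z)`. Its remainder is at most `r^(m+1) / ((m+1)(1-r))` for `r = ‖z‖ = e^{-1/m}`, and
since `r^(m+1) = e^{-1} r` and `e^{1/m} ≥ 1 + 1/m` this is at most `e^{-1}`. The reverse triangle
inequality and `‖log w‖ ≥ -Re (log w) = -log ‖w‖` give the bound.
-/

namespace Complex

theorem neg_log_norm_le_norm_log (w : ℂ) : -Real.log ‖w‖ ≤ ‖log w‖ := by
  rw [← log_re]
  exact (neg_le_abs _).trans (abs_re_le_norm _)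

theorem logTaylor_neg (n : ℕ) (z : ℂ) :
    logTaylor n (-z) = -∑ j ∈ Finset.range n, z ^ j / j := by
  simp only [logTaylor, ← Finset.sum_neg_distrib]
  refine Finset.sum_congr rfl fun j _ => ?_
  rw [neg_pow, pow_succ]
  ring_nf
  simp

theorem sum_range_succ_pow_div_eq_sum_Icc (z : ℂ) (N : ℕ) :
    ∑ j ∈ Finset.range (N + 1), z ^ j / j = ∑ j ∈ Finset.Icc 1 N, z ^ j / j := by
  rw [Finset.range_eq_Ico, Finset.sum_eq_sum_Ico_succ_bot (by omega : 0 < N + 1),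
    Finset.Ico_add_one_right_eq_Icc]
  simp

theorem norm_neg_log_one_sub_sub_sum_Icc_le {z : ℂ} (hz : ‖z‖ < 1) (N : ℕ) :
    ‖-log (1 - z) - ∑ j ∈ Finset.Icc 1 N, z ^ j / j‖
      ≤ ‖z‖ ^ (N + 1) * (1 - ‖z‖)⁻¹ / (N + 1) := by
  have harg : (1 - z).arg ≠ Real.pi := by
    simpa [sub_eq_add_neg] using
      slitPlane_arg_ne_pi (mem_slitPlane_of_norm_lt_one (z := -z) (by rwa [norm_neg]))
  have h := norm_log_one_sub_inv_add_logTaylor_neg_le N hz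
  rwa [logTaylor_neg, sum_range_succ_pow_div_eq_sum_Icc, ← sub_eq_add_neg, log_inv _ harg] at h

theorem neg_log_norm_one_sub_sub_le_norm_sum_Icc {z : ℂ} (hz : ‖z‖ < 1) (N : ℕ) :
    -Real.log ‖1 - z‖ - ‖z‖ ^ (N + 1) * (1 - ‖z‖)⁻¹ / (N + 1)
      ≤ ‖∑ j ∈ Finset.Icc 1 N, z ^ j / j‖ := by
  have hlog : -Real.log ‖1 - z‖ ≤ ‖-log (1 - z)‖ :=
    norm_neg (log (1 - z)) ▸ neg_log_norm_le_norm_log _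
  linarith [norm_neg_log_one_sub_sub_sum_Icc_le hz N,
    norm_le_norm_add_norm_sub' (-log (1 - z)) (∑ j ∈ Finset.Icc 1 N, z ^ j / j)]

theorem ofReal_exp_neg_div_mul_exp_I_mul_eq_pow (m t : ℕ) (θ : ℝ) :
    (Real.exp (-(t : ℝ) / m) : ℂ) * exp (I * t * θ) = exp (-1 / (m : ℂ) + I * θ) ^ t := by
  rw [ofReal_exp, ← exp_add, ← exp_nat_mul]
  congr 1
  push_cast
  ring

end Complex

namespace Real

theorem exp_neg_one_div_le {x : ℝ} (hx : 0 < x) : exp (-1 / x) ≤ x / (x + 1) := by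
  rw [neg_div, exp_neg, inv_le_comm₀ (exp_pos _) (by positivity), inv_div,
    add_div, div_self hx.ne', add_comm]
  exact add_one_le_exp _

theorem exp_neg_one_div_pow_succ_mul_inv_one_sub_div_le {m : ℕ} (hm : 0 < m) :
    exp (-1 / m) ^ (m + 1) * (1 - exp (-1 / m))⁻¹ / (m + 1) ≤ exp (-1) := by
  have hm' : (0 : ℝ) < m := by exact_mod_cast hm
  set r := exp (-1 / m) with hr
  have hpow : r ^ (m + 1) = exp (-1) * r := by
    rw [hr, ← exp_nat_mul, ← exp_add]
    congr 1
    field_simp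
    push_cast
    ring
  have hr_le : r ≤ m / (m + 1) := exp_neg_one_div_le hm'
  have hr_lt_one : r < 1 := hr_le.trans_lt ((div_lt_one (by positivity)).2 (by linarith))
  have key : r ≤ (m + 1) * (1 - r) := by
    rw [le_div_iff₀ (by positivity)] at hr_le
    nlinarith
  rw [hpow, mul_assoc, mul_div_assoc]
  refine mul_le_of_le_one_right (exp_pos _).le ?_
  rwa [div_le_one (by positivity), ← div_eq_mul_inv, div_le_iff₀ (by linarith)]

end Real

theorem stmt19_general (m : ℕ) (hm : 3 ≤ m) (θ : ℝ) :
    -Real.log (‖1 - Complex.exp (-1/(m:ℂ) + Complex.I * θ)‖) - Real.exp (-1)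
      ≤ ‖∑ t ∈ Finset.Icc 1 m,
          (Real.exp (-(t:ℝ)/m) : ℂ) * Complex.exp (Complex.I * t * θ) / t‖ := by
  have hm_pos : 0 < m := by omega
  set z := Complex.exp (-1 / (m : ℂ) + Complex.I * θ)
  have hnorm : ‖z‖ = Real.exp (-1 / m) := by
    rw [Complex.norm_exp]
    congr 1
    simp
  have hz : ‖z‖ < 1 := by
    rw [hnorm, Real.exp_lt_one_iff]
    exact div_neg_of_neg_of_pos (by norm_num) (by exact_mod_cast hm_pos)
  simp only [Complex.ofReal_exp_neg_div_mul_exp_I_mul_eq_pow]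
  have h := Complex.neg_log_norm_one_sub_sub_le_norm_sum_Icc hz m
  rw [hnorm] at h
  linarith [Real.exp_neg_one_div_pow_succ_mul_inv_one_sub_div_le hm_pos]

theorem stmt19 (m : ℕ) (hm : 3 ≤ m) (θ : ℝ) (hθ : |θ| ≤ Real.pi/3) :
    -Real.log (‖1 - Complex.exp (-1/(m:ℂ) + Complex.I * θ)‖) - Real.exp (-1)
      ≤ ‖∑ t ∈ Finset.Icc 1 m,
          (Real.exp (-(t:ℝ)/m) : ℂ) * Complex.exp (Complex.I * t * θ) / t‖ :=
  stmt19_general m hm θ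
end
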